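/- Let Φ(x) = (1/√(2π))·∫_{−∞}^x e^{−t²/2} dt be the standard normal distribution function and define F(x) = 2·e^{x²/2}·(1 − Φ(x))·(1 + x²) − x·√(2/π) for x > 0. Then for all x > 0, 0 < F(x) ≤ 1; moreover F is strictly decreasing on (0,∞) and lim_{x→0⁺} F(x) = 1. (Equivalently, the second derivative of the Stein solution f for h(x) = |x|, given by f(x) = 1 − 2e^{x²/2}Φ(x) for x ≤ 0 and f(x) = 2e^{x²/2}(1 − Φ(x)) − 1 for x > 0, satisfies ‖f''‖_∞ = 1.) -/

import Mathlib

open MeasureTheory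
open scoped ENNReal NNReal
open Real Filter Set

/-- The standard normal distribution function `Φ(x) = (1/√(2π))·∫_{−∞}^x e^{−t²/2} dt`. -/
noncomputable def stdNormalCDF (x : ℝ) : ℝ :=
  (Real.sqrt (2 * Real.pi))⁻¹ * ∫ t in Set.Iic x, Real.exp (-t ^ 2 / 2)

/-- The function `F(x) = 2·e^{x²/2}·(1 − Φ(x))·(1 + x²) − x·√(2/π)` (i.e. the second
derivative, for `x > 0`, of the Stein solution for `h(x) = |x|`). -/
noncomputable def steinSecondDerivative (x : ℝ) : ℝ :=
  2 * Real.exp (x ^ 2 / 2) * (1 - stdNormalCDF x) * (1 + x ^ 2) - x * Real.sqrt (2 / Real.pi)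

lemma myInt : Integrable (fun t : ℝ => Real.exp (-t ^ 2 / 2)) := by
  have h := integrable_exp_neg_mul_sq (b := (2:ℝ)⁻¹) (by norm_num)
  convert h using 2 with t
  ring_nf

lemma myTotal : ∫ t : ℝ, Real.exp (-t ^ 2 / 2) = Real.sqrt (2 * Real.pi) := by
  have h := integral_gaussian (2:ℝ)⁻¹
  rw [show Real.pi / (2:ℝ)⁻¹ = 2 * Real.pi by ring] at h
  rw [← h]
  congr 1 with t
  ring_nf

noncomputable def II (x : ℝ) : ℝ := ∫ t in Set.Ioi x, Real.exp (-t ^ 2 / 2)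

lemma II_zero : II 0 = Real.sqrt (2 * Real.pi) / 2 := by
  have h := integral_gaussian_Ioi (2:ℝ)⁻¹
  rw [show Real.pi / (2:ℝ)⁻¹ = 2 * Real.pi by ring] at h
  rw [II, ← h]
  congr 1 with t
  ring_nf

lemma Iic_eq (x : ℝ) : (∫ t in Set.Iic x, Real.exp (-t ^ 2 / 2)) = Real.sqrt (2 * Real.pi) - II x := by
  have := intervalIntegral.integral_Iic_add_Ioi (b := x) (f := fun t : ℝ => Real.exp (-t ^ 2 / 2))
    myInt.integrableOn myInt.integrableOn
  rw [myTotal] at this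
  rw [II]; linarith [this]

lemma hasDerivAt_II (x : ℝ) : HasDerivAt II (-Real.exp (-x ^ 2 / 2)) x := by
  have hcont : Continuous (fun t : ℝ => Real.exp (-t ^ 2 / 2)) := by continuity
  have key : ∀ y : ℝ, II y = (Real.sqrt (2 * Real.pi) - ∫ t in Set.Iic (0:ℝ), Real.exp (-t ^ 2 / 2))
      - ∫ t in (0:ℝ)..y, Real.exp (-t ^ 2 / 2) := by
    intro y
    have h := intervalIntegral.integral_Iic_sub_Iic (μ := volume)
      (f := fun t : ℝ => Real.exp (-t ^ 2 / 2)) (a := 0) (b := y)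
      myInt.integrableOn myInt.integrableOn
    have h2 := Iic_eq y
    rw [← h]
    linarith [h2]
  have hD : HasDerivAt (fun u => ∫ t in (0:ℝ)..u, Real.exp (-t ^ 2 / 2)) (Real.exp (-x ^ 2 / 2)) x :=
    intervalIntegral.integral_hasDerivAt_right (hcont.intervalIntegrable 0 x)
      hcont.aestronglyMeasurable.stronglyMeasurableAtFilter hcont.continuousAt
  have hII : II = fun y => (Real.sqrt (2 * Real.pi) - ∫ t in Set.Iic (0:ℝ), Real.exp (-t ^ 2 / 2))
      - ∫ t in (0:ℝ)..y, Real.exp (-t ^ 2 / 2) := funext key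
  rw [hII]
  exact hD.const_sub _

lemma tendsto_II : Tendsto II atTop (nhds 0) := by
  have h := MeasureTheory.intervalIntegral_tendsto_integral_Ioi (μ := volume) 0
    (myInt.integrableOn) tendsto_id (f := fun t : ℝ => Real.exp (-t ^ 2 / 2))
  have key : ∀ y : ℝ, II y = II 0 - ∫ t in (0:ℝ)..y, Real.exp (-t ^ 2 / 2) := by
    intro y
    have h1 := intervalIntegral.integral_Iic_sub_Iic (μ := volume)
      (f := fun t : ℝ => Real.exp (-t ^ 2 / 2)) (a := 0) (b := y)
      myInt.integrableOn myInt.integrableOn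
    have h2 := Iic_eq y
    have h3 := Iic_eq 0
    rw [← h1]
    linarith
  have : Tendsto (fun y => II 0 - ∫ t in (0:ℝ)..y, Real.exp (-t ^ 2 / 2)) atTop (nhds (II 0 - II 0)) :=
    tendsto_const_nhds.sub h
  simp only [sub_self] at this
  exact this.congr (fun y => (key y).symm)

lemma pos_of_strictAntiOn_tendsto_zero {g : ℝ → ℝ} {x : ℝ}
    (h1 : StrictAntiOn g (Set.Ici x)) (h2 : Tendsto g atTop (nhds 0)) : 0 < g x := by
  have hx1 : g (x + 1) < g x :=
    h1 (Set.mem_Ici.2 le_rfl) (Set.mem_Ici.2 (by linarith)) (by linarith)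
  have hnn : (0:ℝ) ≤ g (x + 1) := by
    refine le_of_tendsto h2 ?_
    filter_upwards [eventually_ge_atTop (x + 2)] with z hz
    have : g z < g (x + 1) :=
      h1 (Set.mem_Ici.2 (by linarith)) (Set.mem_Ici.2 (by linarith)) (by linarith)
    linarith
  linarith

lemma hasDerivAt_expsq (y : ℝ) :
    HasDerivAt (fun y : ℝ => Real.exp (-y ^ 2 / 2)) (-y * Real.exp (-y ^ 2 / 2)) y := by
  have h : HasDerivAt (fun y : ℝ => -y ^ 2 / 2) (-y) y := by
    have := ((hasDerivAt_pow 2 y).neg).div_const 2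
    refine this.congr_deriv ?_
    push_cast; ring
  have := h.exp
  convert this using 1; ring

lemma tendsto_three_inv : Tendsto (fun y : ℝ => 3 / y) atTop (nhds 0) := by
  have := tendsto_inv_atTop_zero.const_mul (3:ℝ)
  simp only [mul_zero] at this
  exact this.congr (fun y => (div_eq_mul_inv 3 y).symm)

lemma hasDerivAt_gA {y : ℝ} (hy : 0 < y) :
    HasDerivAt (fun y : ℝ => Real.exp (-y ^ 2 / 2) * (y ^ 2 + 2) / (y ^ 3 + 3 * y) - II y)
      (-6 * Real.exp (-y ^ 2 / 2) / (y ^ 3 + 3 * y) ^ 2) y := by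
  have hD0 : y ^ 3 + 3 * y ≠ 0 := by positivity
  have hN : HasDerivAt (fun y : ℝ => Real.exp (-y ^ 2 / 2) * (y ^ 2 + 2))
      (-y * Real.exp (-y ^ 2 / 2) * (y ^ 2 + 2) + Real.exp (-y ^ 2 / 2) * (2 * y)) y := by
    have := (hasDerivAt_expsq y).mul ((hasDerivAt_pow 2 y).add_const 2)
    refine this.congr_deriv ?_; push_cast; ring
  have hD : HasDerivAt (fun y : ℝ => y ^ 3 + 3 * y) (3 * y ^ 2 + 3) y := by
    have := (hasDerivAt_pow 3 y).add ((hasDerivAt_id y).const_mul 3)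
    refine this.congr_deriv ?_; push_cast; ring
  have hq := hN.div hD hD0
  have := hq.sub (hasDerivAt_II y)
  refine this.congr_deriv ?_
  have hφ := Real.exp_ne_zero (-y ^ 2 / 2)
  field_simp
  ring

lemma tendsto_gA :
    Tendsto (fun y : ℝ => Real.exp (-y ^ 2 / 2) * (y ^ 2 + 2) / (y ^ 3 + 3 * y) - II y)
      atTop (nhds 0) := by
  have h1 : Tendsto (fun y : ℝ => Real.exp (-y ^ 2 / 2) * (y ^ 2 + 2) / (y ^ 3 + 3 * y))
      atTop (nhds 0) := by
    apply squeeze_zero' (g := fun y : ℝ => 3 / y) ?_ ?_ tendsto_three_inv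
    · filter_upwards [eventually_ge_atTop (1:ℝ)] with y hy
      positivity
    · filter_upwards [eventually_ge_atTop (1:ℝ)] with y hy
      rw [div_le_div_iff₀ (by positivity) (by positivity)]
      have hφ : Real.exp (-y ^ 2 / 2) ≤ 1 := Real.exp_le_one_iff.2 (by nlinarith)
      have hφ0 : 0 < Real.exp (-y ^ 2 / 2) := Real.exp_pos _
      nlinarith [mul_le_mul_of_nonneg_right hφ (show (0:ℝ) ≤ (y ^ 2 + 2) * y by positivity)]
  have := h1.sub tendsto_II
  simpa using this

lemma millsA {x : ℝ} (hx : 0 < x) :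
    II x < Real.exp (-x ^ 2 / 2) * (x ^ 2 + 2) / (x ^ 3 + 3 * x) := by
  have h := pos_of_strictAntiOn_tendsto_zero (g :=
      fun y : ℝ => Real.exp (-y ^ 2 / 2) * (y ^ 2 + 2) / (y ^ 3 + 3 * y) - II y) (x := x)
    ?_ tendsto_gA
  · linarith
  · apply strictAntiOn_of_deriv_neg (convex_Ici x)
    · intro y hy
      exact (hasDerivAt_gA (lt_of_lt_of_le hx hy)).continuousAt.continuousWithinAt
    · intro y hy
      rw [interior_Ici] at hy
      have hy0 : 0 < y := lt_trans hx hy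
      rw [(hasDerivAt_gA hy0).deriv]
      have : (0:ℝ) < 6 * Real.exp (-y ^ 2 / 2) / (y ^ 3 + 3 * y) ^ 2 := by positivity
      have heq : -6 * Real.exp (-y ^ 2 / 2) / (y ^ 3 + 3 * y) ^ 2
          = -(6 * Real.exp (-y ^ 2 / 2) / (y ^ 3 + 3 * y) ^ 2) := by ring
      rw [heq]; linarith

lemma hasDerivAt_gB (y : ℝ) :
    HasDerivAt (fun y : ℝ => II y - Real.exp (-y ^ 2 / 2) * y / (y ^ 2 + 1))
      (-2 * Real.exp (-y ^ 2 / 2) / (y ^ 2 + 1) ^ 2) y := by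
  have hD0 : y ^ 2 + 1 ≠ 0 := by positivity
  have hN : HasDerivAt (fun y : ℝ => Real.exp (-y ^ 2 / 2) * y)
      (-y * Real.exp (-y ^ 2 / 2) * y + Real.exp (-y ^ 2 / 2)) y := by
    have := (hasDerivAt_expsq y).mul (hasDerivAt_id y)
    simp only [id_eq] at this
    refine this.congr_deriv ?_; ring
  have hD : HasDerivAt (fun y : ℝ => y ^ 2 + 1) (2 * y) y := by
    have := (hasDerivAt_pow 2 y).add_const 1
    refine this.congr_deriv ?_; push_cast; ring
  have hq := hN.div hD hD0
  have := (hasDerivAt_II y).sub hq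
  refine this.congr_deriv ?_
  have hφ := Real.exp_ne_zero (-y ^ 2 / 2)
  field_simp
  ring

lemma tendsto_gB :
    Tendsto (fun y : ℝ => II y - Real.exp (-y ^ 2 / 2) * y / (y ^ 2 + 1)) atTop (nhds 0) := by
  have h1 : Tendsto (fun y : ℝ => Real.exp (-y ^ 2 / 2) * y / (y ^ 2 + 1)) atTop (nhds 0) := by
    apply squeeze_zero' (g := fun y : ℝ => 3 / y) ?_ ?_ tendsto_three_inv
    · filter_upwards [eventually_ge_atTop (1:ℝ)] with y hy
      positivity
    · filter_upwards [eventually_ge_atTop (1:ℝ)] with y hy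
      rw [div_le_div_iff₀ (by positivity) (by positivity)]
      have hφ : Real.exp (-y ^ 2 / 2) ≤ 1 := Real.exp_le_one_iff.2 (by nlinarith)
      have hφ0 : 0 < Real.exp (-y ^ 2 / 2) := Real.exp_pos _
      nlinarith [mul_le_mul_of_nonneg_right hφ (show (0:ℝ) ≤ y * y by positivity)]
  have := tendsto_II.sub h1
  simpa using this

lemma millsB (x : ℝ) : Real.exp (-x ^ 2 / 2) * x / (x ^ 2 + 1) < II x := by
  have h := pos_of_strictAntiOn_tendsto_zero (g :=
      fun y : ℝ => II y - Real.exp (-y ^ 2 / 2) * y / (y ^ 2 + 1)) (x := x)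
    ?_ tendsto_gB
  · linarith
  · apply strictAntiOn_of_deriv_neg (convex_Ici x)
    · intro y _
      exact (hasDerivAt_gB y).continuousAt.continuousWithinAt
    · intro y _
      rw [(hasDerivAt_gB y).deriv]
      have : (0:ℝ) < 2 * Real.exp (-y ^ 2 / 2) / (y ^ 2 + 1) ^ 2 := by positivity
      have heq : -2 * Real.exp (-y ^ 2 / 2) / (y ^ 2 + 1) ^ 2
          = -(2 * Real.exp (-y ^ 2 / 2) / (y ^ 2 + 1) ^ 2) := by ring
      rw [heq]; linarith

lemma sqrt2pi_pos : 0 < Real.sqrt (2 * Real.pi) :=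
  Real.sqrt_pos.2 (by positivity)

lemma oneSub (x : ℝ) : 1 - stdNormalCDF x = (Real.sqrt (2 * Real.pi))⁻¹ * II x := by
  rw [stdNormalCDF, Iic_eq x]
  field_simp
  ring

lemma sqrt_two_div_pi : Real.sqrt (2 / Real.pi) = 2 * (Real.sqrt (2 * Real.pi))⁻¹ := by
  have hπ : (0:ℝ) < Real.pi := Real.pi_pos
  have h : (2:ℝ) / Real.pi = (2 * (Real.sqrt (2 * Real.pi))⁻¹) ^ 2 := by
    rw [mul_pow, inv_pow, Real.sq_sqrt (by positivity)]
    field_simp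
  rw [h, Real.sqrt_sq (by positivity)]

lemma F_eq : steinSecondDerivative = fun x : ℝ =>
    2 * (Real.sqrt (2 * Real.pi))⁻¹ * (Real.exp (x ^ 2 / 2) * II x * (1 + x ^ 2) - x) := by
  funext x
  rw [steinSecondDerivative, oneSub, sqrt_two_div_pi]
  ring

lemma hasDerivAt_exppos (x : ℝ) :
    HasDerivAt (fun y : ℝ => Real.exp (y ^ 2 / 2)) (x * Real.exp (x ^ 2 / 2)) x := by
  have h : HasDerivAt (fun y : ℝ => y ^ 2 / 2) x x := by
    have := (hasDerivAt_pow 2 x).div_const 2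
    refine this.congr_deriv ?_
    push_cast; ring
  have := h.exp
  convert this using 1; ring

lemma hasDerivAt_F (x : ℝ) : HasDerivAt steinSecondDerivative
    (2 * (Real.sqrt (2 * Real.pi))⁻¹ *
      (Real.exp (x ^ 2 / 2) * II x * (x ^ 3 + 3 * x) - (x ^ 2 + 2))) x := by
  rw [F_eq]
  have h1 : HasDerivAt (fun y : ℝ => Real.exp (y ^ 2 / 2) * II y * (1 + y ^ 2) - y)
      ((x * Real.exp (x ^ 2 / 2) * II x + Real.exp (x ^ 2 / 2) * (-Real.exp (-x ^ 2 / 2)))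
          * (1 + x ^ 2)
        + Real.exp (x ^ 2 / 2) * II x * (2 * x) - 1) x := by
    have := (((hasDerivAt_exppos x).mul (hasDerivAt_II x)).mul
      (((hasDerivAt_pow 2 x)).const_add 1)).sub (hasDerivAt_id x)
    refine this.congr_deriv ?_
    push_cast [Pi.mul_apply]; ring
  have := h1.const_mul (2 * (Real.sqrt (2 * Real.pi))⁻¹)
  refine this.congr_deriv ?_
  have hneg : Real.exp (-x ^ 2 / 2) = (Real.exp (x ^ 2 / 2))⁻¹ := by
    rw [← Real.exp_neg]; ring_nf
  rw [hneg]
  field_simp [Real.exp_ne_zero]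
  ring

lemma F_zero : steinSecondDerivative 0 = 1 := by
  rw [F_eq]
  simp only [ne_eq, OfNat.ofNat_ne_zero, not_false_eq_true, zero_pow, zero_div, Real.exp_zero,
    one_mul, mul_one, sub_zero, II_zero]
  rw [mul_comm]
  field_simp
  norm_num

lemma F_strictAnti : StrictAntiOn steinSecondDerivative (Set.Ioi 0) := by
  apply strictAntiOn_of_deriv_neg (convex_Ioi 0)
  · intro y _
    exact (hasDerivAt_F y).continuousAt.continuousWithinAt
  · intro y hy
    rw [interior_Ioi] at hy
    have hy0 : (0:ℝ) < y := hy
    rw [(hasDerivAt_F y).deriv]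
    have hD : (0:ℝ) < y ^ 3 + 3 * y := by positivity
    have hA := millsA hy0
    have key : Real.exp (y ^ 2 / 2) * Real.exp (-y ^ 2 / 2) = 1 := by
      rw [← Real.exp_add]; ring_nf; exact Real.exp_zero
    have h2 : II y * (y ^ 3 + 3 * y) < Real.exp (-y ^ 2 / 2) * (y ^ 2 + 2) := by
      have := (lt_div_iff₀ hD).1 hA
      linarith [this]
    have h3 : Real.exp (y ^ 2 / 2) * (II y * (y ^ 3 + 3 * y))
        < Real.exp (y ^ 2 / 2) * (Real.exp (-y ^ 2 / 2) * (y ^ 2 + 2)) :=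
      mul_lt_mul_of_pos_left h2 (Real.exp_pos _)
    have h4 : Real.exp (y ^ 2 / 2) * II y * (y ^ 3 + 3 * y) - (y ^ 2 + 2) < 0 := by
      nlinarith [h3, key]
    have hs : (0:ℝ) < 2 * (Real.sqrt (2 * Real.pi))⁻¹ := by
      have := sqrt2pi_pos; positivity
    exact mul_neg_of_pos_of_neg hs h4

lemma F_tendsto : Filter.Tendsto steinSecondDerivative (nhdsWithin 0 (Set.Ioi 0)) (nhds 1) := by
  have := (hasDerivAt_F 0).continuousAt.continuousWithinAt (s := Set.Ioi 0)
  rw [ContinuousWithinAt, F_zero] at this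
  exact this

lemma F_pos {x : ℝ} (hx : 0 < x) : 0 < steinSecondDerivative x := by
  rw [F_eq]
  have hs : (0:ℝ) < 2 * (Real.sqrt (2 * Real.pi))⁻¹ := by
    have := sqrt2pi_pos; positivity
  have hB := millsB x
  have key : Real.exp (x ^ 2 / 2) * Real.exp (-x ^ 2 / 2) = 1 := by
    rw [← Real.exp_add]; ring_nf; exact Real.exp_zero
  have hD : (0:ℝ) < x ^ 2 + 1 := by positivity
  have h2 : Real.exp (-x ^ 2 / 2) * x < II x * (x ^ 2 + 1) := by
    have := (div_lt_iff₀ hD).1 hB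
    linarith
  have h3 : Real.exp (x ^ 2 / 2) * (Real.exp (-x ^ 2 / 2) * x)
      < Real.exp (x ^ 2 / 2) * (II x * (x ^ 2 + 1)) :=
    mul_lt_mul_of_pos_left h2 (Real.exp_pos _)
  have h4 : 0 < Real.exp (x ^ 2 / 2) * II x * (1 + x ^ 2) - x := by
    nlinarith [h3, key]
  positivity

lemma F_le_one {x : ℝ} (hx : 0 < x) : steinSecondDerivative x ≤ 1 := by
  refine ge_of_tendsto F_tendsto ?_
  have hmem : Set.Ioo (0:ℝ) x ∈ nhdsWithin 0 (Set.Ioi 0) :=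
    Ioo_mem_nhdsGT_of_mem ⟨le_rfl, hx⟩
  filter_upwards [hmem] with t ht
  exact (F_strictAnti ht.1 hx ht.2).le

/-- For all `x > 0`, `0 < F(x) ≤ 1`; moreover `F` is strictly decreasing on `(0,∞)` and
`F(x) → 1` as `x → 0⁺`, where `F(x) = 2e^{x²/2}(1 − Φ(x))(1 + x²) − x√(2/π)`.
(Equivalently, the Stein solution `f` for `h(x) = |x|` satisfies `‖f''‖_∞ = 1`.) -/
theorem stein_second_derivative_bounds :
    (∀ x : ℝ, 0 < x → 0 < steinSecondDerivative x ∧ steinSecondDerivative x ≤ 1) ∧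
      StrictAntiOn steinSecondDerivative (Set.Ioi 0) ∧
      Filter.Tendsto steinSecondDerivative (nhdsWithin 0 (Set.Ioi 0)) (nhds 1) :=
  ⟨fun _ hx => ⟨F_pos hx, F_le_one hx⟩, F_strictAnti, F_tendsto⟩
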